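/- arXiv:1710.03398 — 6 statements merged into one kernel-verified Lean document; each statement's English description precedes it below -/
import Mathlib

section
/- Let N ≥ 2 and n ≥ 1, and let V̂ ∈ ℝ^{N×(N−1)} satisfy V̂ᵀV̂ = I_{N−1} and V̂ᵀ1_N = 0. Then for any sequence x : ℕ → ℝ^{Nn}, writing x_i(k) ∈ ℝⁿ for the i-th block of x(k) (i = 1,…,N), the following are equivalent: (i) for all i, j ∈ {1,…,N}, x_i(k) − x_j(k) → 0 as k → ∞; (ii) (V̂ᵀ ⊗ I_n) x(k) → 0 as k → ∞. -/
/-!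
Appending the column `1` to `V̂` gives a square matrix with left inverse `[V̂ᵀ; 1ᵀ/N]`, hence
also right inverse, i.e. `V̂ V̂ᵀ = I - 11ᵀ/N`. So `V̂ V̂ᵀ` recovers every difference `xᵢ - xⱼ`
from `V̂ᵀ x`, while `V̂ᵀ` kills the consensus direction `1`. The factor `I_n` makes
`V̂ᵀ ⊗ I_n` act in this way on each of the `n` coordinates separately.
-/

open Matrix Filter Topology
open scoped Kronecker

namespace Matrix

section Completion

variable {K ι κ : Type*} [Field K] [Fintype ι] [Fintype κ] [DecidableEq ι] [DecidableEq κ]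
  {V : Matrix ι κ K}

theorem mul_transpose_eq_one_sub_of_transpose_mul_eq_one [CharZero K] (e : ι ≃ κ ⊕ Unit)
    (hV : Vᵀ * V = 1) (hV1 : Vᵀ *ᵥ (fun _ => 1) = 0) :
    V * Vᵀ = 1 - of fun _ _ => (Fintype.card ι : K)⁻¹ := by
  have hcard : (Fintype.card ι : K) ≠ 0 := by
    rw [Nat.cast_ne_zero, Fintype.card_congr e]; simp
  have hcols : ∀ a, ∑ i, V i a = 0 := fun a => by
    simpa [mulVec, dotProduct] using congrFun hV1 a
  have hsquare : fromRows Vᵀ (of fun (_ : Unit) (_ : ι) => (Fintype.card ι : K)⁻¹) *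
      fromCols V (of fun (_ : ι) (_ : Unit) => (1 : K)) = 1 := by
    rw [fromRows_mul_fromCols, hV, ← fromBlocks_one]
    congr 1
    · ext a u; simp [mul_apply, hcols]
    · ext u a; simp [mul_apply, ← Finset.mul_sum, hcols]
    · ext; simp [mul_apply, hcard]
  rw [← fromCols_mul_fromRows_eq_one_comm e, fromCols_mul_fromRows] at hsquare
  rw [← hsquare]
  ext; simp [mul_apply]

theorem mulVec_mulVec_transpose_apply_sub [CharZero K] (e : ι ≃ κ ⊕ Unit)
    (hV : Vᵀ * V = 1) (hV1 : Vᵀ *ᵥ (fun _ => 1) = 0) (v : ι → K) (i j : ι) :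
    (V *ᵥ Vᵀ *ᵥ v) i - (V *ᵥ Vᵀ *ᵥ v) j = v i - v j := by
  rw [mulVec_mulVec, mul_transpose_eq_one_sub_of_transpose_mul_eq_one e hV hV1, sub_mulVec,
    one_mulVec]
  simp only [Pi.sub_apply, mulVec, dotProduct, of_apply]
  ring

end Completion

section Consensus

variable {K ι κ α : Type*} [Field K] [TopologicalSpace K] [IsTopologicalRing K]
  [Fintype ι] {V : Matrix ι κ K} {l : Filter α} {v : α → ι → K}

theorem tendsto_mulVec_nhds_zero {m n : Type*} [Fintype n] (A : Matrix m n K) {f : α → n → K}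
    (h : Tendsto f l (𝓝 0)) : Tendsto (fun k => A *ᵥ f k) l (𝓝 0) := by
  simpa [Function.comp_def] using
    (((continuous_const (y := A)).matrix_mulVec continuous_id).tendsto 0).comp h

theorem tendsto_transpose_mulVec_nhds_zero_of_consensus [Nonempty ι]
    (hV1 : Vᵀ *ᵥ (fun _ => 1) = 0) (h : ∀ i j, Tendsto (fun k => v k i - v k j) l (𝓝 0)) :
    Tendsto (fun k => Vᵀ *ᵥ v k) l (𝓝 0) := by
  obtain ⟨i₀⟩ := ‹Nonempty ι›
  have hshift : ∀ k, Vᵀ *ᵥ v k = Vᵀ *ᵥ fun i => v k i - v k i₀ := fun k => by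
    have : (fun i => v k i - v k i₀) = v k - v k i₀ • fun _ => 1 := by ext; simp
    rw [this, mulVec_sub, mulVec_smul, hV1, smul_zero, sub_zero]
  simp only [hshift]
  exact tendsto_mulVec_nhds_zero _ (tendsto_pi_nhds.2 fun i => h i i₀)

theorem consensus_of_tendsto_transpose_mulVec_nhds_zero [Fintype κ] [DecidableEq ι]
    [DecidableEq κ] [CharZero K] (e : ι ≃ κ ⊕ Unit) (hV : Vᵀ * V = 1) (hV1 : Vᵀ *ᵥ (fun _ => 1) = 0)
    (h : Tendsto (fun k => Vᵀ *ᵥ v k) l (𝓝 0)) (i j : ι) :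
    Tendsto (fun k => v k i - v k j) l (𝓝 0) := by
  have hproj := tendsto_pi_nhds.1 (tendsto_mulVec_nhds_zero V h)
  simpa only [mulVec_mulVec_transpose_apply_sub e hV hV1, Pi.zero_apply, sub_zero] using
    (hproj i).sub (hproj j)

theorem tendsto_transpose_mulVec_nhds_zero_iff_consensus [Fintype κ] [DecidableEq ι]
    [DecidableEq κ] [CharZero K] (e : ι ≃ κ ⊕ Unit) (hV : Vᵀ * V = 1)
    (hV1 : Vᵀ *ᵥ (fun _ => 1) = 0) :
    Tendsto (fun k => Vᵀ *ᵥ v k) l (𝓝 0) ↔ ∀ i j, Tendsto (fun k => v k i - v k j) l (𝓝 0) :=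
  have : Nonempty ι := ⟨e.symm (.inr ())⟩
  ⟨consensus_of_tendsto_transpose_mulVec_nhds_zero e hV hV1,
    tendsto_transpose_mulVec_nhds_zero_of_consensus hV1⟩

end Consensus

theorem kronecker_one_mulVec_apply {R m ι n : Type*} [CommSemiring R] [Fintype ι] [Fintype n]
    [DecidableEq n] (A : Matrix m ι R) (x : ι × n → R) (a : m) (p : n) :
    ((A ⊗ₖ (1 : Matrix n n R)) *ᵥ x) (a, p) = (A *ᵥ fun i => x (i, p)) a := by
  simp [mulVec, dotProduct, Fintype.sum_prod_type, one_apply]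

end Matrix

theorem stmt0_general (N n : ℕ) (hN : 2 ≤ N)
    (V : Matrix (Fin N) (Fin (N - 1)) ℝ)
    (hV : Vᵀ * V = 1) (hV1 : Vᵀ *ᵥ (fun _ => 1) = 0)
    (x : ℕ → Fin N × Fin n → ℝ) :
    (∀ i j : Fin N,
      Tendsto (fun k => fun p : Fin n => x k (i, p) - x k (j, p)) atTop (nhds 0))
      ↔
    Tendsto (fun k => (Vᵀ ⊗ₖ (1 : Matrix (Fin n) (Fin n) ℝ)) *ᵥ x k)
      atTop (nhds 0) := by
  have e : Fin N ≃ Fin (N - 1) ⊕ Unit :=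
    (finCongr (by omega)).trans (finSumFinEquiv.symm.trans (Equiv.sumCongr (.refl _) finOneEquiv))
  calc (∀ i j : Fin N, Tendsto (fun k p => x k (i, p) - x k (j, p)) atTop (𝓝 0))
      ↔ ∀ p, ∀ i j : Fin N, Tendsto (fun k => x k (i, p) - x k (j, p)) atTop (𝓝 0) := by
        simp only [tendsto_pi_nhds, Pi.zero_apply]
        exact ⟨fun h p i j => h i j p, fun h i j p => h p i j⟩
    _ ↔ ∀ p, Tendsto (fun k => Vᵀ *ᵥ fun i => x k (i, p)) atTop (𝓝 0) :=
        forall_congr' fun _ => (tendsto_transpose_mulVec_nhds_zero_iff_consensus e hV hV1).symm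
    _ ↔ Tendsto (fun k => (Vᵀ ⊗ₖ (1 : Matrix (Fin n) (Fin n) ℝ)) *ᵥ x k) atTop (𝓝 0) := by
        simp only [tendsto_pi_nhds, Prod.forall, kronecker_one_mulVec_apply, Pi.zero_apply]
        exact forall_comm

/-- Lemma 1 (trajectory-wise): state consensus is equivalent to convergence
to zero of the dimension-reduced state `(V̂ᵀ ⊗ I_n) x(k)`. -/
theorem stmt0 (N n : ℕ) (hN : 2 ≤ N) (hn : 1 ≤ n)
    (V : Matrix (Fin N) (Fin (N - 1)) ℝ)
    (hV : Vᵀ * V = 1) (hV1 : Vᵀ *ᵥ (fun _ => 1) = 0)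
    (x : ℕ → Fin N × Fin n → ℝ) :
    (∀ i j : Fin N,
      Tendsto (fun k => fun p : Fin n => x k (i, p) - x k (j, p)) atTop (nhds 0))
      ↔
    Tendsto (fun k => (Vᵀ ⊗ₖ (1 : Matrix (Fin n) (Fin n) ℝ)) *ᵥ x k)
      atTop (nhds 0) :=
  stmt0_general N n hN V hV hV1 x
end

section
/- Let L ∈ ℝ^{N×N} and μ̄ > 0. If L 1_N = 0 and the symmetric matrix L + Lᵀ − μ̄ LᵀL is positive semidefinite, then Lᵀ 1_N = 0 (i.e., all column sums of L are also zero, even though the corresponding digraph need not be balanced). -/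
open Matrix

namespace Matrix

variable {n : Type*} [Fintype n]

theorem transpose_mulVec_eq_zero_of_posSemidef_add_transpose_sub_smul
    {L : Matrix n n ℝ} {μ : ℝ} (hpsd : (L + Lᵀ - μ • (Lᵀ * L)).PosSemidef)
    {x : n → ℝ} (hLx : L *ᵥ x = 0) : Lᵀ *ᵥ x = 0 := by
  have hMx : (L + Lᵀ - μ • (Lᵀ * L)) *ᵥ x = Lᵀ *ᵥ x := by
    simp [sub_mulVec, add_mulVec, smul_mulVec, ← mulVec_mulVec, hLx]
  have hquad : star x ⬝ᵥ (L + Lᵀ - μ • (Lᵀ * L)) *ᵥ x = 0 := by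
    rw [hMx, star_trivial, dotProduct_mulVec, vecMul_transpose, hLx, zero_dotProduct]
  rwa [hpsd.dotProduct_mulVec_zero_iff, hMx] at hquad

end Matrix

theorem stmt2_general (N : ℕ) (L : Matrix (Fin N) (Fin N) ℝ) (μb : ℝ)
    (hL1 : L *ᵥ (fun _ => 1) = 0)
    (hpsd : (L + Lᵀ - μb • (Lᵀ * L)).PosSemidef) :
    Lᵀ *ᵥ (fun _ => 1) = 0 :=
  transpose_mulVec_eq_zero_of_posSemidef_add_transpose_sub_smul hpsd hL1

/-- Remark 1 (first claim): if `L 1 = 0` and `L + Lᵀ − μ̄ LᵀL ⪰ 0` for some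
`μ̄ > 0`, then also `Lᵀ 1 = 0`, i.e., all column sums of `L` vanish. -/
theorem stmt2 (N : ℕ) (L : Matrix (Fin N) (Fin N) ℝ) (μb : ℝ) (hμb : 0 < μb)
    (hL1 : L *ᵥ (fun _ => 1) = 0)
    (hpsd : (L + Lᵀ - μb • (Lᵀ * L)).PosSemidef) :
    Lᵀ *ᵥ (fun _ => 1) = 0 :=
  stmt2_general N L μb hL1 hpsd
end

section
/- Let L ∈ ℝ^{N×N} and μ̄ > 0 satisfy L 1_N = 0, Lᵀ 1_N = 0, and L + Lᵀ − μ̄ LᵀL positive semidefinite. Let V̂ ∈ ℝ^{N×(N−1)} satisfy V̂ᵀV̂ = I_{N−1} and V̂ᵀ1_N = 0, and set L̂ = V̂ᵀ L V̂. Then L̂ + L̂ᵀ − μ̄ L̂ᵀL̂ is positive semidefinite. -/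
/-!
With `B = Pᴴ A P`, one has `B + Bᴴ - μ BᴴB = Pᴴ (A + Aᴴ - μ AᴴA) P + μ (AP)ᴴ (1 - PPᴴ) (AP)`.
The first term is a congruence of a PSD matrix, and when `Pᴴ P = 1` the matrix `1 - PPᴴ` is an
orthogonal projection, so the second term is PSD as well for `μ ≥ 0`.
-/

open Matrix

open scoped ComplexOrder

namespace Matrix

variable {m n 𝕜 : Type*} [Fintype m] [Fintype n] [DecidableEq n] [RCLike 𝕜]

theorem posSemidef_one_sub_mul_conjTranspose_of_conjTranspose_mul_eq_one [DecidableEq m]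
    {P : Matrix n m 𝕜} (hP : Pᴴ * P = 1) : (1 - P * Pᴴ).PosSemidef := by
  have hidem : (1 - P * Pᴴ)ᴴ * (1 - P * Pᴴ) = 1 - P * Pᴴ := by
    simp only [conjTranspose_sub, conjTranspose_one, conjTranspose_mul, conjTranspose_conjTranspose,
      sub_mul, mul_sub, one_mul, mul_one, Matrix.mul_assoc]
    rw [← Matrix.mul_assoc Pᴴ P, hP, Matrix.one_mul]
    abel
  exact hidem ▸ posSemidef_conjTranspose_mul_self (1 - P * Pᴴ)

theorem compression_add_conjTranspose_sub_smul_eq (A : Matrix n n 𝕜) (P : Matrix n m 𝕜)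
    (μ : ℝ) :
    Pᴴ * A * P + (Pᴴ * A * P)ᴴ - μ • ((Pᴴ * A * P)ᴴ * (Pᴴ * A * P)) =
      Pᴴ * (A + Aᴴ - μ • (Aᴴ * A)) * P + μ • ((A * P)ᴴ * (1 - P * Pᴴ) * (A * P)) := by
  simp only [conjTranspose_mul, conjTranspose_conjTranspose, Matrix.mul_add, Matrix.add_mul,
    Matrix.mul_sub, Matrix.sub_mul, Matrix.mul_smul, Matrix.smul_mul, Matrix.mul_one,
    Matrix.mul_assoc, smul_sub]
  abel

theorem PosSemidef.compression_add_conjTranspose_sub_smul [DecidableEq m]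
    {A : Matrix n n 𝕜} {μ : ℝ} (hμ : 0 ≤ μ) (hA : (A + Aᴴ - μ • (Aᴴ * A)).PosSemidef)
    {P : Matrix n m 𝕜} (hP : Pᴴ * P = 1) :
    (Pᴴ * A * P + (Pᴴ * A * P)ᴴ - μ • ((Pᴴ * A * P)ᴴ * (Pᴴ * A * P))).PosSemidef := by
  rw [compression_add_conjTranspose_sub_smul_eq]
  have hproj := posSemidef_one_sub_mul_conjTranspose_of_conjTranspose_mul_eq_one hP
  exact (hA.conjTranspose_mul_mul_same P).add ((hproj.conjTranspose_mul_mul_same (A * P)).smul hμ)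

end Matrix

theorem stmt3_general (N : ℕ) (L : Matrix (Fin N) (Fin N) ℝ) (μb : ℝ) (hμb : 0 < μb)
    (hpsd : (L + Lᵀ - μb • (Lᵀ * L)).PosSemidef)
    (V : Matrix (Fin N) (Fin (N - 1)) ℝ)
    (hV : Vᵀ * V = 1)
    (Lh : Matrix (Fin (N - 1)) (Fin (N - 1)) ℝ) (hLh : Lh = Vᵀ * L * V) :
    (Lh + Lhᵀ - μb • (Lhᵀ * Lh)).PosSemidef := by
  rw [← conjTranspose_eq_transpose_of_trivial] at hpsd hV ⊢
  subst hLh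
  exact hpsd.compression_add_conjTranspose_sub_smul hμb.le hV

/-- Remark 1 (second claim): Assumption (L) is inherited by the
dimension-reduced Laplacian `L̂ = V̂ᵀ L V̂`. -/
theorem stmt3 (N : ℕ) (L : Matrix (Fin N) (Fin N) ℝ) (μb : ℝ) (hμb : 0 < μb)
    (hL1 : L *ᵥ (fun _ => 1) = 0) (hLT1 : Lᵀ *ᵥ (fun _ => 1) = 0)
    (hpsd : (L + Lᵀ - μb • (Lᵀ * L)).PosSemidef)
    (V : Matrix (Fin N) (Fin (N - 1)) ℝ)
    (hV : Vᵀ * V = 1) (hV1 : Vᵀ *ᵥ (fun _ => 1) = 0)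
    (Lh : Matrix (Fin (N - 1)) (Fin (N - 1)) ℝ) (hLh : Lh = Vᵀ * L * V) :
    (Lh + Lhᵀ - μb • (Lhᵀ * Lh)).PosSemidef :=
  stmt3_general N L μb hμb hpsd V hV Lh hLh
end

section
/- Let A ∈ ℝ^{n×n} be such that, viewed as a complex matrix, A is diagonalizable and every eigenvalue of A has modulus 1, and let B ∈ ℝ^{n×m}. Then there exists a symmetric positive definite matrix X ∈ ℝ^{n×n} such that (a) X = AᵀXA and (b) I_m − BᵀXB is positive semidefinite. -/
/-! Conjugation by `P` turns `A` into a diagonal matrix whose entries lie on the unit circle,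
i.e. a unitary one, so the Gram matrix `(P⁻¹)ᴴ P⁻¹` is a positive definite solution of
`AᴴXA = X`. As `A` is real, the real part of that solution is a real one. Solutions are closed
under positive scaling, and a small enough multiple makes `BᵀXB ≤ 1` in the Loewner order. -/

open Matrix

theorem Units.star_mul_star_inv_mul_inv_mul_eq_of_conj_mem_unitary {M : Type*} [Monoid M]
    [StarMul M] (u : Mˣ) {a : M} (ha : ↑u⁻¹ * a * ↑u ∈ unitary M) :
    star a * (star ↑u⁻¹ * ↑u⁻¹) * a = star ↑u⁻¹ * ↑u⁻¹ := by
  obtain ⟨d, hd, rfl⟩ : ∃ d ∈ unitary M, a = u * d * ↑u⁻¹ :=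
    ⟨_, ha, by simp [mul_assoc]⟩
  have hstar : star (u : M) * star ↑u⁻¹ = 1 := by rw [← star_mul, u.inv_mul, star_one]
  simp only [star_mul, mul_assoc, ← mul_assoc (star (u : M)), hstar, one_mul]
  simp [← mul_assoc (star d), Unitary.star_mul_self_of_mem hd]

theorem IsSelfAdjoint.exists_pos_smul_le_one {A : Type*} [TopologicalSpace A] [Ring A] [StarRing A]
    [PartialOrder A] [StarOrderedRing A] [Algebra ℝ A] [PosSMulMono ℝ A]
    [ContinuousFunctionalCalculus ℝ A IsSelfAdjoint] {a : A} (ha : IsSelfAdjoint a) :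
    ∃ c : ℝ, 0 < c ∧ c • a ≤ 1 := by
  obtain ⟨r, hr⟩ := (ContinuousFunctionalCalculus.isCompact_spectrum (R := ℝ) a).bddAbove
  have hr1 : 0 < max r 1 := lt_max_of_lt_right one_pos
  have hle : a ≤ algebraMap ℝ A (max r 1) :=
    le_algebraMap_of_spectrum_le fun x hx => (hr hx).trans (le_max_left r 1)
  refine ⟨(max r 1)⁻¹, inv_pos.mpr hr1, ?_⟩
  calc (max r 1)⁻¹ • a ≤ (max r 1)⁻¹ • algebraMap ℝ A (max r 1) :=
        smul_le_smul_of_nonneg_left hle (inv_nonneg.mpr hr1.le)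
    _ = 1 := by rw [Algebra.algebraMap_eq_smul_one, smul_smul, inv_mul_cancel₀ hr1.ne', one_smul]

namespace Matrix

open ComplexOrder

variable {n : Type*} [Fintype n] {𝕜 : Type*} [RCLike 𝕜]

theorem IsDiag.mem_unitary_of_forall_mem_spectrum_norm_eq_one [DecidableEq n]
    {D : Matrix n n 𝕜} (hD : D.IsDiag) (hspec : ∀ c ∈ spectrum 𝕜 D, ‖c‖ = 1) :
    D ∈ unitary (Matrix n n 𝕜) := by
  rw [← hD.diagonal_diag] at hspec ⊢
  simp only [spectrum_diagonal, Set.forall_mem_range, diag_apply] at hspec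
  refine mem_unitaryGroup_iff'.mpr ?_
  rw [star_eq_conjTranspose, diagonal_conjTranspose, diagonal_mul_diagonal, ← diagonal_one]
  congr 1; funext i
  simp [RCLike.conj_mul, hspec i]

theorem PosDef.map_re {Y : Matrix n n 𝕜} (hY : Y.PosDef) : (Y.map RCLike.re).PosDef := by
  refine PosDef.of_dotProduct_mulVec_pos ?_ fun x hx => ?_
  · ext i j
    simp [← hY.1.apply i j]
  · set xc : n → 𝕜 := fun i => x i
    have hxc : xc ≠ 0 := fun h => hx (funext fun i => by simpa [xc] using congrFun h i)
    have hquad : star x ⬝ᵥ Y.map RCLike.re *ᵥ x = RCLike.re (star xc ⬝ᵥ Y *ᵥ xc) := by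
      simp [xc, dotProduct, mulVec, Finset.mul_sum, map_sum]
    rw [hquad]
    exact (RCLike.pos_iff.mp (hY.dotProduct_mulVec_pos hxc)).1

theorem map_re_conjTranspose_map_ofReal_mul_mul {m : Type*} [Fintype m] (A : Matrix n m ℝ)
    (Y : Matrix n n 𝕜) :
    ((A.map ((↑) : ℝ → 𝕜))ᴴ * Y * A.map ((↑) : ℝ → 𝕜)).map RCLike.re =
      Aᵀ * Y.map RCLike.re * A := by
  ext i j
  simp [mul_apply, Finset.sum_mul, map_sum]

end Matrix

open ComplexOrder MatrixOrder in
/-- Lemma 2 (existence part): for a neutrally stable `A` (diagonalizable over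
`ℂ` with all eigenvalues of modulus 1) there exists a symmetric positive
definite `X` with `X = AᵀXA` and `I − BᵀXB ⪰ 0`. -/
theorem stmt4 (n m : ℕ)
    (A : Matrix (Fin n) (Fin n) ℝ) (B : Matrix (Fin n) (Fin m) ℝ)
    (hdiag : ∃ P : Matrix (Fin n) (Fin n) ℂ, IsUnit P ∧
      (P⁻¹ * A.map Complex.ofReal * P).IsDiag)
    (hspec : ∀ c ∈ spectrum ℂ (A.map Complex.ofReal), ‖c‖ = 1) :
    ∃ X : Matrix (Fin n) (Fin n) ℝ, X.PosDef ∧ X = Aᵀ * X * A ∧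
      ((1 : Matrix (Fin m) (Fin m) ℝ) - Bᵀ * X * B).PosSemidef := by
  obtain ⟨P, ⟨u, rfl⟩, hD⟩ := hdiag
  rw [← coe_units_inv] at hD
  have hunitary := hD.mem_unitary_of_forall_mem_spectrum_norm_eq_one
    (by rwa [spectrum.units_conjugate'])
  obtain ⟨Xc, hXc, hinv⟩ : ∃ Xc : Matrix (Fin n) (Fin n) ℂ,
      Xc.PosDef ∧ (A.map Complex.ofReal)ᴴ * Xc * A.map Complex.ofReal = Xc :=
    ⟨_, .conjTranspose_mul_self _ (mulVec_injective_iff_isUnit.mpr u⁻¹.isUnit),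
      u.star_mul_star_inv_mul_inv_mul_eq_of_conj_mem_unitary hunitary⟩
  set Xr := Xc.map Complex.re
  have hXr : Xr.PosDef := hXc.map_re
  have hXrinv : Aᵀ * Xr * A = Xr :=
    (map_re_conjTranspose_map_ofReal_mul_mul A Xc).symm.trans (congrArg (map · Complex.re) hinv)
  have hM : (Bᵀ * Xr * B).PosSemidef := by
    simpa using hXr.posSemidef.conjTranspose_mul_mul_same B
  obtain ⟨c, hc, hcM⟩ := hM.isHermitian.isSelfAdjoint.exists_pos_smul_le_one
  refine ⟨c • Xr, hXr.smul hc, by rw [Matrix.mul_smul, Matrix.smul_mul, hXrinv], ?_⟩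
  rwa [Matrix.mul_smul, Matrix.smul_mul, ← Matrix.le_iff]
end

section
/- Let A ∈ ℝ^{n×n}, B ∈ ℝ^{n×m}, and let X ∈ ℝ^{n×n} be symmetric with X = AᵀXA. Set F = BᵀXA and, for z ∈ ℂ such that zI − A is invertible (all matrices regarded as complex matrices), set G(z) = F(zI − A)^{−1}B. Then G(z)* + G(z) + BᵀXB = (|z|² − 1) · [(zI − A)^{−1}B]* X [(zI − A)^{−1}B], where * denotes conjugate transpose. -/
/-!
Write `M = zI - A` and `W = M⁻¹B`, so that `B = MW`. Then `G = Wᴴ (MᴴXA) W`,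
`Gᴴ = Wᴴ (AᴴXM) W` and `BᵀXB = Wᴴ (MᴴXM) W`, and the three middle factors add up to
`(M + A)ᴴ X (M + A) - AᴴXA = |z|² X - X`, since `M + A = zI` and `AᴴXA = X`.
-/

open Matrix

section StarRing

variable {R : Type*} [CommRing R] [StarRing R] {n m : Type*} [Fintype n] [DecidableEq n]

theorem conjTranspose_mul_mul_add_of_add_eq_smul_one {A X M : Matrix n n R} {z : R}
    (hMA : M + A = z • (1 : Matrix n n R)) (hAXA : Aᴴ * X * A = X) :
    Aᴴ * X * M + Mᴴ * X * A + Mᴴ * X * M = (star z * z - 1) • X := by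
  have hsq : (M + A)ᴴ * X * (M + A) = (star z * z) • X := by
    simp only [hMA, conjTranspose_smul, conjTranspose_one, smul_mul, Matrix.mul_smul, one_mul,
      mul_one, smul_smul, mul_comm z]
  rw [sub_smul, one_smul, ← hsq]
  simp only [conjTranspose_add, add_mul, mul_add, hAXA]
  abel

theorem conjTranspose_add_self_add_eq_of_conjTranspose_mul_mul_self [Fintype m]
    {A X : Matrix n n R} {B : Matrix n m R} {z : R}
    (hX : Xᴴ = X) (hAXA : Aᴴ * X * A = X) (hz : IsUnit (z • (1 : Matrix n n R) - A)) :
    (Bᴴ * X * A * ((z • 1 - A)⁻¹ * B))ᴴ + Bᴴ * X * A * ((z • 1 - A)⁻¹ * B) + Bᴴ * X * B =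
      (star z * z - 1) • (((z • 1 - A)⁻¹ * B)ᴴ * X * ((z • 1 - A)⁻¹ * B)) := by
  set M := z • (1 : Matrix n n R) - A
  have hdet : IsUnit M.det := (isUnit_iff_isUnit_det M).mp hz
  obtain ⟨W, rfl⟩ : ∃ W, B = M * W :=
    ⟨M⁻¹ * B, (mul_nonsing_inv_cancel_left (A := M) B hdet).symm⟩
  rw [nonsing_inv_mul_cancel_left (A := M) W hdet]
  have hmiddle := conjTranspose_mul_mul_add_of_add_eq_smul_one (M := M) (z := z)
    (sub_add_cancel _ _) hAXA
  calc _ = Wᴴ * (Aᴴ * X * M + Mᴴ * X * A + Mᴴ * X * M) * W := by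
        simp only [conjTranspose_mul, conjTranspose_conjTranspose, hX, Matrix.mul_add,
          Matrix.add_mul, Matrix.mul_assoc]
    _ = _ := by rw [hmiddle, Matrix.mul_smul, Matrix.smul_mul]

end StarRing

theorem map_ofReal_mul {l m o : Type*} [Fintype m] (M : Matrix l m ℝ) (N : Matrix m o ℝ) :
    (M * N).map Complex.ofReal = M.map Complex.ofReal * N.map Complex.ofReal :=
  Matrix.map_mul (f := Complex.ofRealHom)

theorem conjTranspose_map_ofReal {l m : Type*} (M : Matrix l m ℝ) :
    (M.map Complex.ofReal)ᴴ = Mᵀ.map Complex.ofReal := by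
  rw [← conjTranspose_map _ fun x => (Complex.conj_ofReal x).symm,
    conjTranspose_eq_transpose_of_trivial]

theorem ofReal_norm_sq_sub_one (z : ℂ) : ((‖z‖ ^ 2 - 1 : ℝ) : ℂ) = star z * z - 1 := by
  rw [Complex.ofReal_sub, Complex.ofReal_one, ← Complex.normSq_eq_norm_sq,
    Complex.normSq_eq_conj_mul_self, Complex.star_def]

/-- The key algebraic identity in the proof of Lemma 2: with `X = AᵀXA`
symmetric and `F = BᵀXA`, for `G(z) = F(zI − A)⁻¹B` (over `ℂ`) one has
`G(z)* + G(z) + BᵀXB = (|z|² − 1)·[(zI − A)⁻¹B]* X [(zI − A)⁻¹B]`. -/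
theorem stmt5 (n m : ℕ)
    (A : Matrix (Fin n) (Fin n) ℝ) (B : Matrix (Fin n) (Fin m) ℝ)
    (X : Matrix (Fin n) (Fin n) ℝ) (hXsym : Xᵀ = X) (hXA : X = Aᵀ * X * A)
    (F : Matrix (Fin m) (Fin n) ℝ) (hF : F = Bᵀ * X * A)
    (z : ℂ)
    (Ac : Matrix (Fin n) (Fin n) ℂ) (hAc : Ac = A.map Complex.ofReal)
    (Bc : Matrix (Fin n) (Fin m) ℂ) (hBc : Bc = B.map Complex.ofReal)
    (Fc : Matrix (Fin m) (Fin n) ℂ) (hFc : Fc = F.map Complex.ofReal)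
    (Xc : Matrix (Fin n) (Fin n) ℂ) (hXc : Xc = X.map Complex.ofReal)
    (hz : IsUnit (z • (1 : Matrix (Fin n) (Fin n) ℂ) - Ac))
    (G : Matrix (Fin m) (Fin m) ℂ)
    (hG : G = Fc * (z • (1 : Matrix (Fin n) (Fin n) ℂ) - Ac)⁻¹ * Bc) :
    Gᴴ + G + (Bᵀ * X * B).map Complex.ofReal =
      ((‖z‖ ^ 2 - 1 : ℝ) : ℂ) •
        (((z • (1 : Matrix (Fin n) (Fin n) ℂ) - Ac)⁻¹ * Bc)ᴴ * Xc *
          ((z • (1 : Matrix (Fin n) (Fin n) ℂ) - Ac)⁻¹ * Bc)) := by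
  subst hG hFc hF hAc hBc hXc
  have hXc : (X.map Complex.ofReal)ᴴ = X.map Complex.ofReal := by
    rw [conjTranspose_map_ofReal, hXsym]
  have hAXA : (A.map Complex.ofReal)ᴴ * X.map Complex.ofReal * A.map Complex.ofReal =
      X.map Complex.ofReal := by
    rw [conjTranspose_map_ofReal, ← map_ofReal_mul, ← map_ofReal_mul, ← hXA]
  rw [ofReal_norm_sq_sub_one, map_ofReal_mul, map_ofReal_mul, map_ofReal_mul, map_ofReal_mul,
    ← conjTranspose_map_ofReal, Matrix.mul_assoc _ _⁻¹]
  exact conjTranspose_add_self_add_eq_of_conjTranspose_mul_mul_self hXc hAXA hz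
end

section
/- Let A ∈ ℝ^{n×n}, B ∈ ℝ^{n×m}, and let X ∈ ℝ^{n×n} be symmetric positive definite with X = AᵀXA. Assume the pair (A,B) is reachable, i.e., for every w ∈ ℝⁿ, Bᵀ(Aᵀ)ᵏ w = 0 for all k ∈ ℕ implies w = 0. Set F = BᵀXA. Then the pair (F,A) is observable: for every v ∈ ℝⁿ, F Aᵏ v = 0 for all k ∈ ℕ implies v = 0. -/
/-!
From `X = AᵀXA` with `X` invertible, `A` is invertible and `(Aᵀ)ᵏ X = X A⁻ᵏ`. If `F Aᵏ v = 0`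
for all `k`, then `u = A v` lies in the unobservable subspace of `(BᵀX, A)`. That subspace is
`A`-invariant, hence, `A` being injective on a finite-dimensional space, also `A⁻¹`-invariant;
so `Bᵀ (Aᵀ)ᵏ X u = BᵀX A⁻ᵏ u = 0` for all `k`. Reachability gives `X u = 0`, whence `u = 0`
and `v = 0`.
-/

open Matrix

namespace Module.End

variable {K V : Type*} [DivisionRing K] [AddCommGroup V] [Module K V] [FiniteDimensional K V]

theorem map_eq_of_injective_of_mem_invtSubmodule {f : End K V} (hf : Function.Injective f)
    {p : Submodule K V} (hp : p ∈ f.invtSubmodule) : p.map f = p :=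
  Submodule.eq_of_le_of_finrank_eq ((mem_invtSubmodule_iff_map_le f).1 hp)
    (LinearEquiv.finrank_eq (Submodule.equivMapOfInjective f hf p)).symm

end Module.End

namespace Matrix

variable {K m n : Type*} [Fintype n] [DecidableEq n]

section CommRing

variable [CommRing K] {A X : Matrix n n K}

theorem isUnit_of_eq_transpose_mul_mul (hX : IsUnit X) (hXA : X = Aᵀ * X * A) : IsUnit A := by
  rw [isUnit_iff_isUnit_det] at hX ⊢
  rw [hXA, det_mul] at hX
  exact isUnit_of_mul_isUnit_right hX

theorem transpose_pow_mul_eq_mul_nonsing_inv_pow (hA : IsUnit A) (hXA : X = Aᵀ * X * A)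
    (k : ℕ) : Aᵀ ^ k * X = X * A⁻¹ ^ k := by
  have h : SemiconjBy X A⁻¹ Aᵀ := by
    rw [SemiconjBy]
    conv_lhs => rw [hXA]
    rw [Matrix.mul_assoc, mul_nonsing_inv _ ((isUnit_iff_isUnit_det A).1 hA), Matrix.mul_one]
  exact (h.pow_right k).eq.symm

end CommRing

section Field

variable [Field K]

def unobservableSubspace (C : Matrix m n K) (A : Matrix n n K) : Submodule K (n → K) :=
  ⨅ k : ℕ, LinearMap.ker (C * A ^ k).mulVecLin

variable {C : Matrix m n K} {A : Matrix n n K} {u : n → K}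

theorem mem_unobservableSubspace :
    u ∈ unobservableSubspace C A ↔ ∀ k : ℕ, C *ᵥ (A ^ k *ᵥ u) = 0 := by
  simp [unobservableSubspace, Submodule.mem_iInf, mulVec_mulVec]

theorem unobservableSubspace_mem_invtSubmodule :
    unobservableSubspace C A ∈ Module.End.invtSubmodule A.mulVecLin := by
  intro u hu
  rw [Submodule.mem_comap, mem_unobservableSubspace] at *
  intro k
  rw [mulVecLin_apply, mulVec_mulVec (M := A ^ k), ← pow_succ]
  exact hu (k + 1)

theorem nonsing_inv_mulVec_mem_unobservableSubspace (hA : IsUnit A)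
    (hu : u ∈ unobservableSubspace C A) : A⁻¹ *ᵥ u ∈ unobservableSubspace C A := by
  rw [← Module.End.map_eq_of_injective_of_mem_invtSubmodule (f := A.mulVecLin)
    (mulVec_injective_iff_isUnit.2 hA) unobservableSubspace_mem_invtSubmodule] at hu
  obtain ⟨w, hw, rfl⟩ := hu
  rwa [mulVecLin_apply, mulVec_mulVec, nonsing_inv_mul _ ((isUnit_iff_isUnit_det A).1 hA),
    one_mulVec]

theorem mulVec_nonsing_inv_pow_mulVec_eq_zero (hA : IsUnit A)
    (hu : ∀ k : ℕ, C *ᵥ (A ^ k *ᵥ u) = 0) (k : ℕ) : C *ᵥ (A⁻¹ ^ k *ᵥ u) = 0 := by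
  suffices A⁻¹ ^ k *ᵥ u ∈ unobservableSubspace C A by
    simpa using mem_unobservableSubspace.1 this 0
  induction k with
  | zero => simpa using mem_unobservableSubspace.2 hu
  | succ k ih =>
    rw [pow_succ', ← mulVec_mulVec]
    exact nonsing_inv_mulVec_mem_unobservableSubspace hA ih

end Field

end Matrix

/-- Lemma 2 (observability claim): if `X ≻ 0` is symmetric with `X = AᵀXA`
and `(A,B)` is reachable, then the pair `(F,A)` with `F = BᵀXA` is
observable. -/
theorem stmt7 (n m : ℕ)
    (A : Matrix (Fin n) (Fin n) ℝ) (B : Matrix (Fin n) (Fin m) ℝ)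
    (X : Matrix (Fin n) (Fin n) ℝ) (hX : X.PosDef) (hXA : X = Aᵀ * X * A)
    (hreach : ∀ w : Fin n → ℝ, (∀ k : ℕ, Bᵀ *ᵥ ((Aᵀ) ^ k *ᵥ w) = 0) → w = 0)
    (F : Matrix (Fin m) (Fin n) ℝ) (hF : F = Bᵀ * X * A) :
    ∀ v : Fin n → ℝ, (∀ k : ℕ, F *ᵥ (A ^ k *ᵥ v) = 0) → v = 0 := by
  intro v hv
  have hA : IsUnit A := isUnit_of_eq_transpose_mul_mul hX.isUnit hXA
  have hAv : ∀ k : ℕ, (Bᵀ * X) *ᵥ (A ^ k *ᵥ (A *ᵥ v)) = 0 := fun k => by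
    simpa only [hF, mulVec_mulVec, Matrix.mul_assoc, pow_mul_comm'] using hv k
  have hXAv : X *ᵥ (A *ᵥ v) = 0 := hreach _ fun k => by
    rw [mulVec_mulVec (M := Aᵀ ^ k), transpose_pow_mul_eq_mul_nonsing_inv_pow hA hXA,
      ← mulVec_mulVec, mulVec_mulVec (M := Bᵀ)]
    exact mulVec_nonsing_inv_pow_mulVec_eq_zero hA hAv k
  have hAv0 : A *ᵥ v = 0 := mulVec_injective_iff_isUnit.2 hX.isUnit (by rwa [mulVec_zero])
  exact mulVec_injective_iff_isUnit.2 hA (by rwa [mulVec_zero])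
end
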